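/- arXiv:2510.00598 — 8 statements merged into one kernel-verified Lean document; each statement's English description precedes it below -/
import Mathlib

section
/- For every s ∈ [0,1], ∫₀¹ g(s,t)² m(t) dt = (1/20) · m(s)² · (1 + 2m(s)). Equivalently, 30·∫₀¹ g(s,t)² m(t) dt = (3/2) m(s)² (1 + 2m(s)), which is the function h_ols(s) appearing in the limit covariance kernel for the ordinary least squares version of the test. -/
/-!
Splitting `[0,1]` at `s`, the integrand is `(1-s)² t² m(t)` on `[0,s]` and `s² (1-t)² m(t)` on
`[s,1]`. The reflection `t ↦ 1 - t` fixes `m`, so both pieces reduce to the single moment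
`M(a) = ∫₀ᵃ t² m(t) dt = a⁴/4 - a⁵/5`, and the claim becomes the polynomial identity
`(1-s)² M(s) + s² M(1-s) = m(s)² (1 + 2 m(s)) / 20`.
-/

/-- `m(s) = s(1-s)`. -/
noncomputable def m (s : ℝ) : ℝ := s * (1 - s)

/-- `g(s,t) = min(s,t)·(1 - max(s,t))`. -/
noncomputable def g (s t : ℝ) : ℝ := min s t * (1 - max s t)

open intervalIntegral

lemma m_one_sub (t : ℝ) : m (1 - t) = m t := by
  unfold m; ring

lemma g_of_le {s t : ℝ} (h : t ≤ s) : g s t = t * (1 - s) := by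
  simp only [g, min_eq_right h, max_eq_left h]

lemma g_of_ge {s t : ℝ} (h : s ≤ t) : g s t = s * (1 - t) := by
  simp only [g, min_eq_left h, max_eq_right h]

lemma integral_sq_mul_m (a : ℝ) : ∫ t in (0 : ℝ)..a, t ^ 2 * m t = a ^ 4 / 4 - a ^ 5 / 5 := by
  have hpoly : (fun t : ℝ => t ^ 2 * m t) = fun t => t ^ 3 - t ^ 4 := by
    funext t; unfold m; ring
  rw [hpoly, integral_sub (intervalIntegrable_pow 3) (intervalIntegrable_pow 4),
    integral_pow, integral_pow]
  ring

lemma integral_one_sub_sq_mul_m (a : ℝ) :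
    ∫ t in a..1, (1 - t) ^ 2 * m t = (1 - a) ^ 4 / 4 - (1 - a) ^ 5 / 5 := by
  have hreflect := integral_comp_sub_left (fun u : ℝ => u ^ 2 * m u) (a := a) (b := 1) 1
  simp only [m_one_sub, sub_self] at hreflect
  rw [hreflect, integral_sq_mul_m]

/-- For every `s ∈ [0,1]`,
`∫₀¹ g(s,t)² m(t) dt = (1/20) m(s)² (1 + 2 m(s))`. -/
theorem stmt2 (s : ℝ) (hs : s ∈ Set.Icc (0 : ℝ) 1) :
    ∫ t in (0 : ℝ)..1, (g s t) ^ 2 * m t = (1 / 20) * (m s) ^ 2 * (1 + 2 * m s) := by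
  obtain ⟨hs0, hs1⟩ := hs
  have hcont : Continuous fun t : ℝ => (g s t) ^ 2 * m t := by
    unfold g m; fun_prop
  have hleft : ∫ t in (0 : ℝ)..s, (g s t) ^ 2 * m t
      = (1 - s) ^ 2 * ∫ t in (0 : ℝ)..s, t ^ 2 * m t := by
    rw [← integral_const_mul]
    refine integral_congr fun t ht => ?_
    rw [Set.uIcc_of_le hs0] at ht
    simp only [g_of_le ht.2]; ring
  have hright : ∫ t in s..1, (g s t) ^ 2 * m t
      = s ^ 2 * ∫ t in s..1, (1 - t) ^ 2 * m t := by
    rw [← integral_const_mul]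
    refine integral_congr fun t ht => ?_
    rw [Set.uIcc_of_le hs1] at ht
    simp only [g_of_ge ht.1]; ring
  rw [← integral_add_adjacent_intervals (hcont.intervalIntegrable 0 s)
      (hcont.intervalIntegrable s 1), hleft, hright, integral_sq_mul_m,
    integral_one_sub_sq_mul_m, m]
  ring
end

section
/- ∫₀¹ ∫₀¹ m(s) · g(s,t)² · m(t) ds dt = 13/25200. Equivalently, (1/30)^{−2} · ∫₀¹∫₀¹ m(s) g(s,t)² m(t) ds dt = 13/28, which is the constant D_ols appearing in the limit covariance kernel for the ordinary least squares version of the test. -/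
open intervalIntegral

lemma m_mul_g_sq_mul_m_of_le {s t : ℝ} (h : t ≤ s) :
    m s * g s t ^ 2 * m t = m s * (1 - s) ^ 2 * (t ^ 3 - t ^ 4) := by
  simp only [m, g, min_eq_right h, max_eq_left h]
  ring

lemma m_mul_g_sq_mul_m_of_ge {s t : ℝ} (h : s ≤ t) :
    m s * g s t ^ 2 * m t = m s * s ^ 2 * (t - 3 * t ^ 2 + 3 * t ^ 3 - t ^ 4) := by
  simp only [m, g, min_eq_left h, max_eq_right h]
  ring

lemma integral_m_mul_g_sq_mul_m {s : ℝ} (hs₀ : 0 ≤ s) (hs₁ : s ≤ 1) :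
    ∫ t in (0 : ℝ)..1, m s * g s t ^ 2 * m t = m s ^ 3 * (1 + 2 * m s) / 20 := by
  have hint : ∀ a b, IntervalIntegrable (fun t => m s * g s t ^ 2 * m t) MeasureTheory.volume a b :=
    Continuous.intervalIntegrable (by unfold m g; fun_prop)
  have hlow : ∫ t in (0 : ℝ)..s, m s * g s t ^ 2 * m t =
      ∫ t in (0 : ℝ)..s, m s * (1 - s) ^ 2 * (t ^ 3 - t ^ 4) :=
    integral_congr fun t ht => m_mul_g_sq_mul_m_of_le (Set.uIcc_of_le hs₀ ▸ ht).2
  have hhigh : ∫ t in s..1, m s * g s t ^ 2 * m t =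
      ∫ t in s..1, m s * s ^ 2 * (t - 3 * t ^ 2 + 3 * t ^ 3 - t ^ 4) :=
    integral_congr fun t ht => m_mul_g_sq_mul_m_of_ge (Set.uIcc_of_le hs₁ ▸ ht).1
  rw [← integral_add_adjacent_intervals (hint 0 s) (hint s 1), hlow, hhigh]
  simp (disch := exact Continuous.intervalIntegrable (by fun_prop) _ _) only
    [integral_add, integral_sub, integral_const_mul, integral_pow, integral_id]
  simp only [m]
  ring

/-- `∫₀¹∫₀¹ m(s) g(s,t)² m(t) ds dt = 13/25200`. -/
theorem stmt3 :
    ∫ s in (0 : ℝ)..1, ∫ t in (0 : ℝ)..1, m s * (g s t) ^ 2 * m t = 13 / 25200 := by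
  have hinner : ∀ s ∈ Set.uIcc (0 : ℝ) 1,
      ∫ t in (0 : ℝ)..1, m s * g s t ^ 2 * m t = m s ^ 3 * (1 + 2 * m s) / 20 := fun s hs => by
    rw [Set.uIcc_of_le zero_le_one] at hs
    exact integral_m_mul_g_sq_mul_m hs.1 hs.2
  rw [integral_congr hinner]
  simp only [m]
  ring_nf
  simp (disch := exact Continuous.intervalIntegrable (by fun_prop) _ _) only
    [integral_add, integral_mul_const, integral_pow]
  norm_num
end

section
/- As T → ∞ over the integers, ( Σ_{k=1}^{T−1} m(k/T)² )^{−2} · Σ_{k=1}^{T−1} Σ_{ℓ=1}^{T−1} m(k/T) · g(k/T, ℓ/T)² · m(ℓ/T) converges to 13/28. That is, for ordinary least squares weights w_k ≡ 1, the quantity D_T(w) converges to D_ols = 13/28. -/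
open Finset Filter

/-- Closed form for `∑_{k<n} k²(t-k)²`. -/
noncomputable def F0 (n t : ℝ) : ℝ :=
  (-1/30)*n + (1/6)*n*t^2 + (-1/2)*n^2*t + (-1/2)*n^2*t^2 + (1/3)*n^3 + (1)*n^3*t
    + (1/3)*n^3*t^2 + (-1/2)*n^4 + (-1/2)*n^4*t + (1/5)*n^5

/-- Closed form for `∑_{l<n} l³(t-l)`. -/
noncomputable def F1 (n t : ℝ) : ℝ :=
  (1/30)*n + (1/4)*n^2*t + (-1/3)*n^3 + (-1/2)*n^3*t + (1/2)*n^4 + (1/4)*n^4*t + (-1/5)*n^5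

/-- Closed form for `∑_{l<n} l(t-l)³`. -/
noncomputable def F2 (n t : ℝ) : ℝ :=
  (1/30)*n + (-1/2)*n*t^2 + (-1/2)*n*t^3 + (3/4)*n^2*t + (3/2)*n^2*t^2 + (1/2)*n^2*t^3
    + (-1/3)*n^3 + (-3/2)*n^3*t + (-1)*n^3*t^2 + (1/2)*n^4 + (3/4)*n^4*t + (-1/5)*n^5

/-- Closed form for the outer sum. -/
noncomputable def Psi (n t C : ℝ) : ℝ :=
  (1/30)*n*C + (-1/105)*n*t + (4/105)*n*t^3 + (1/4)*n^2*t*C + (-1/10)*n^2*t^2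
    + (-1/60)*n^2*t^3 + (1/12)*n^2*t^4 + (-1/3)*n^3*C + (13/180)*n^3*t + (-1/2)*n^3*t*C
    + (1/20)*n^3*t^2 + (-11/40)*n^3*t^3 + (-1/8)*n^3*t^4 + (1/2)*n^4*C + (-1/30)*n^4*t
    + (1/4)*n^4*t*C + (3/10)*n^4*t^2 + (7/24)*n^4*t^3 + (-1/24)*n^4*t^4 + (-1/5)*n^5*C
    + (-7/60)*n^5*t + (-1/4)*n^5*t^2 + (19/120)*n^5*t^3 + (1/8)*n^5*t^4 + (1/12)*n^6*t
    + (-3/20)*n^6*t^2 + (-11/40)*n^6*t^3 + (-1/24)*n^6*t^4 + (3/70)*n^7*t + (1/5)*n^7*t^2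
    + (11/140)*n^7*t^3 + (-1/20)*n^8*t + (-1/20)*n^8*t^2 + (1/90)*n^9*t

/-- Limit function. -/
noncomputable def G (x : ℝ) : ℝ :=
  (13/28 + (15/14)*x^2 + (7/4)*x^4 + (30/7)*x^6 - (53/7)*x^8) / (1 - x^4)^2

lemma L0 (t : ℝ) (n : ℕ) : ∑ k ∈ range n, (k:ℝ)^2*(t-(k:ℝ))^2 = F0 n t := by
  induction n with
  | zero => simp [F0]
  | succ n ih => rw [Finset.sum_range_succ, ih]; simp only [F0]; push_cast; ring

lemma L1 (t : ℝ) (n : ℕ) : ∑ l ∈ range n, (l:ℝ)^3*(t-(l:ℝ)) = F1 n t := by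
  induction n with
  | zero => simp [F1]
  | succ n ih => rw [Finset.sum_range_succ, ih]; simp only [F1]; push_cast; ring

lemma L2 (t : ℝ) (n : ℕ) : ∑ l ∈ range n, (l:ℝ)*(t-(l:ℝ))^3 = F2 n t := by
  induction n with
  | zero => simp [F2]
  | succ n ih => rw [Finset.sum_range_succ, ih]; simp only [F2]; push_cast; ring

set_option maxHeartbeats 1000000 in
lemma L3 (t C : ℝ) (n : ℕ) :
    ∑ k ∈ range n,
      ((k:ℝ)*(t-(k:ℝ))^3 * F1 ((k:ℝ)+1) t + (k:ℝ)^3*(t-(k:ℝ)) * (C - F2 ((k:ℝ)+1) t))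
      = Psi n t C := by
  induction n with
  | zero => simp [Psi]
  | succ n ih =>
      rw [Finset.sum_range_succ, ih]; simp only [Psi, F1, F2]; push_cast; ring

lemma term_lo (t : ℝ) (ht : 0 < t) (k l : ℕ) (h : l ≤ k) :
    m ((k:ℝ)/t) * (g ((k:ℝ)/t) ((l:ℝ)/t)) ^ 2 * m ((l:ℝ)/t)
      = ((k:ℝ)*(t-(k:ℝ))^3/t^8) * ((l:ℝ)^3*(t-(l:ℝ))) := by
  have h' : (l:ℝ)/t ≤ (k:ℝ)/t := by gcongr
  unfold m g
  rw [min_eq_right h', max_eq_left h']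
  field_simp

lemma term_hi (t : ℝ) (ht : 0 < t) (k l : ℕ) (h : k ≤ l) :
    m ((k:ℝ)/t) * (g ((k:ℝ)/t) ((l:ℝ)/t)) ^ 2 * m ((l:ℝ)/t)
      = ((k:ℝ)^3*(t-(k:ℝ))/t^8) * ((l:ℝ)*(t-(l:ℝ))^3) := by
  have h' : (k:ℝ)/t ≤ (l:ℝ)/t := by gcongr
  unfold m g
  rw [min_eq_left h', max_eq_right h']
  field_simp

set_option maxHeartbeats 1000000 in
lemma key (T : ℕ) (hT : 2 ≤ T) :
    ((∑ k ∈ Finset.Icc 1 (T - 1), (m ((k : ℝ) / T)) ^ 2) ^ 2)⁻¹ *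
        (∑ k ∈ Finset.Icc 1 (T - 1), ∑ l ∈ Finset.Icc 1 (T - 1),
          m ((k : ℝ) / T) * (g ((k : ℝ) / T) ((l : ℝ) / T)) ^ 2 * m ((l : ℝ) / T))
      = G (1 / (T:ℝ)) := by
  set t : ℝ := (T:ℝ) with hts
  have ht2 : (2:ℝ) ≤ t := by rw [hts]; exact_mod_cast hT
  have ht : (0:ℝ) < t := by linarith
  have htne : t ≠ 0 := ht.ne'
  have hIcc : Finset.Icc 1 (T-1) = Finset.Ico 1 T := by
    rw [← Finset.Ico_add_one_right_eq_Icc]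
    congr 1
    omega
  -- single-sum closed form
  have hA : ∑ k ∈ Finset.Icc 1 (T-1), (m ((k:ℝ)/t)) ^ 2 = F0 t t / t^4 := by
    rw [hIcc]
    have h0 : ∑ k ∈ Finset.range T, (m ((k:ℝ)/t)) ^ 2
        = ∑ k ∈ Finset.Ico 1 T, (m ((k:ℝ)/t)) ^ 2 := by
      rw [Finset.range_eq_Ico, Finset.sum_eq_sum_Ico_succ_bot (by omega : 0 < T)]
      simp [m]
    rw [← h0]
    have h1 : ∀ k ∈ Finset.range T, (m ((k:ℝ)/t)) ^ 2 = (1/t^4) * ((k:ℝ)^2*(t-(k:ℝ))^2) := by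
      intro k _
      unfold m
      field_simp
    rw [Finset.sum_congr rfl h1, ← Finset.mul_sum, L0]
    ring
  -- double-sum closed form
  have hB : ∑ k ∈ Finset.Icc 1 (T-1), ∑ l ∈ Finset.Icc 1 (T-1),
      m ((k:ℝ)/t) * (g ((k:ℝ)/t) ((l:ℝ)/t)) ^ 2 * m ((l:ℝ)/t)
      = (1/t^8) * Psi t t (F2 t t) := by
    rw [hIcc]
    -- extend inner and outer sums to `range T`
    have hinner0 : ∀ k : ℕ, ∑ l ∈ Finset.Ico 1 T,
        m ((k:ℝ)/t) * (g ((k:ℝ)/t) ((l:ℝ)/t)) ^ 2 * m ((l:ℝ)/t)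
        = ∑ l ∈ Finset.range T,
          m ((k:ℝ)/t) * (g ((k:ℝ)/t) ((l:ℝ)/t)) ^ 2 * m ((l:ℝ)/t) := by
      intro k
      rw [Finset.range_eq_Ico, Finset.sum_eq_sum_Ico_succ_bot (by omega : 0 < T)]
      simp [m]
    have houter0 : ∑ k ∈ Finset.Ico 1 T, ∑ l ∈ Finset.range T,
        m ((k:ℝ)/t) * (g ((k:ℝ)/t) ((l:ℝ)/t)) ^ 2 * m ((l:ℝ)/t)
        = ∑ k ∈ Finset.range T, ∑ l ∈ Finset.range T,
          m ((k:ℝ)/t) * (g ((k:ℝ)/t) ((l:ℝ)/t)) ^ 2 * m ((l:ℝ)/t) := by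
      rw [Finset.range_eq_Ico, Finset.sum_eq_sum_Ico_succ_bot (by omega : 0 < T)]
      simp [m]
    rw [Finset.sum_congr rfl (fun k _ => hinner0 k), houter0]
    -- compute inner sum for each k < T
    have hinner : ∀ k ∈ Finset.range T,
        ∑ l ∈ Finset.range T, m ((k:ℝ)/t) * (g ((k:ℝ)/t) ((l:ℝ)/t)) ^ 2 * m ((l:ℝ)/t)
        = (1/t^8) * ((k:ℝ)*(t-(k:ℝ))^3 * F1 ((k:ℝ)+1) t
            + (k:ℝ)^3*(t-(k:ℝ)) * (F2 t t - F2 ((k:ℝ)+1) t)) := by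
      intro k hk
      have hkT : k + 1 ≤ T := Finset.mem_range.mp hk
      have hsplit : ∑ l ∈ Finset.range T,
          m ((k:ℝ)/t) * (g ((k:ℝ)/t) ((l:ℝ)/t)) ^ 2 * m ((l:ℝ)/t)
          = (∑ l ∈ Finset.range (k+1),
              m ((k:ℝ)/t) * (g ((k:ℝ)/t) ((l:ℝ)/t)) ^ 2 * m ((l:ℝ)/t))
            + ∑ l ∈ Finset.Ico (k+1) T,
              m ((k:ℝ)/t) * (g ((k:ℝ)/t) ((l:ℝ)/t)) ^ 2 * m ((l:ℝ)/t) := by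
        rw [Finset.range_eq_Ico, ← Finset.sum_Ico_consecutive _ (Nat.zero_le (k+1)) hkT,
          ← Finset.range_eq_Ico]
      rw [hsplit]
      have hlo : ∑ l ∈ Finset.range (k+1),
          m ((k:ℝ)/t) * (g ((k:ℝ)/t) ((l:ℝ)/t)) ^ 2 * m ((l:ℝ)/t)
          = ((k:ℝ)*(t-(k:ℝ))^3/t^8) * F1 ((k:ℝ)+1) t := by
        rw [Finset.sum_congr rfl
          (fun l hl => term_lo t ht k l (Nat.lt_succ_iff.mp (Finset.mem_range.mp hl))),
          ← Finset.mul_sum, L1]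
        push_cast
        ring_nf
      have hhi : ∑ l ∈ Finset.Ico (k+1) T,
          m ((k:ℝ)/t) * (g ((k:ℝ)/t) ((l:ℝ)/t)) ^ 2 * m ((l:ℝ)/t)
          = ((k:ℝ)^3*(t-(k:ℝ))/t^8) * (F2 t t - F2 ((k:ℝ)+1) t) := by
        rw [Finset.sum_congr rfl
          (fun l hl => term_hi t ht k l (le_of_lt (Finset.mem_Ico.mp hl).1)),
          ← Finset.mul_sum, Finset.sum_Ico_eq_sub _ hkT, L2, L2]
        push_cast
        rw [← hts]
      rw [hlo, hhi]
      ring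
    rw [Finset.sum_congr rfl hinner, ← Finset.mul_sum, L3]
  rw [hA, hB]
  have hnum : F0 t t = (t^5 - t)/30 := by simp only [F0]; ring
  rw [hnum]
  have ht4 : (16:ℝ) ≤ t^4 := by
    have h := pow_le_pow_left₀ (by norm_num : (0:ℝ) ≤ 2) ht2 4
    norm_num at h
    linarith
  have h5 : t^5 - t ≠ 0 := by
    intro h
    nlinarith [mul_le_mul_of_nonneg_left ht4 (le_of_lt ht)]
  have h4 : (1:ℝ) - (1/t)^4 ≠ 0 := by
    have h0t : (0:ℝ) < 1/t := by positivity
    have h1t : 1/t ≤ 1/2 := by rw [div_le_div_iff₀ ht (by norm_num)]; linarith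
    intro hc
    nlinarith [pow_le_pow_left₀ (le_of_lt h0t) h1t 4]
  have hPsi : Psi t t (F2 t t)
      = (13/25200)*t^10 + (1/840)*t^8 + (7/3600)*t^6 + (1/210)*t^4 - (53/6300)*t^2 := by
    simp only [Psi, F2]; ring
  rw [hPsi]
  simp only [G]
  rw [eq_div_iff (pow_ne_zero 2 h4)]
  have h4' : t^4 - 1 ≠ 0 := by intro hc; linarith
  field_simp
  ring

/-- For ordinary least squares weights `w ≡ 1`, the quantity `D_T(w)`
converges to `D_ols = 13/28` as `T → ∞`. -/
theorem stmt6 :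
    Filter.Tendsto
      (fun T : ℕ =>
        ((∑ k ∈ Finset.Icc 1 (T - 1), (m ((k : ℝ) / T)) ^ 2) ^ 2)⁻¹ *
          ∑ k ∈ Finset.Icc 1 (T - 1), ∑ l ∈ Finset.Icc 1 (T - 1),
            m ((k : ℝ) / T) * (g ((k : ℝ) / T) ((l : ℝ) / T)) ^ 2 * m ((l : ℝ) / T))
      Filter.atTop (nhds (13 / 28)) := by
  have hev : (fun T : ℕ => G (1 / (T:ℝ))) =ᶠ[atTop]
      (fun T : ℕ =>
        ((∑ k ∈ Finset.Icc 1 (T - 1), (m ((k : ℝ) / T)) ^ 2) ^ 2)⁻¹ *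
          ∑ k ∈ Finset.Icc 1 (T - 1), ∑ l ∈ Finset.Icc 1 (T - 1),
            m ((k : ℝ) / T) * (g ((k : ℝ) / T) ((l : ℝ) / T)) ^ 2 * m ((l : ℝ) / T)) := by
    filter_upwards [eventually_ge_atTop 2] with T hT
    exact (key T hT).symm
  have h1 : Filter.Tendsto (fun T : ℕ => 1 / (T:ℝ)) atTop (nhds 0) :=
    tendsto_one_div_atTop_nhds_zero_nat
  have hc : ContinuousAt G 0 := by
    apply ContinuousAt.div
    · fun_prop
    · fun_prop
    · norm_num
  have h2 : Filter.Tendsto (fun T : ℕ => G (1 / (T:ℝ))) atTop (nhds (G 0)) :=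
    hc.tendsto.comp h1
  have hG0 : G 0 = 13/28 := by norm_num [G]
  rw [hG0] at h2
  exact h2.congr' hev
end

section
/- Fix s ∈ (0,1). As T → ∞ over the integers, (1/(T−1)) · Σ_{k=1}^{T−1} g(⌊Ts⌋/T, k/T)² / m(k/T) converges to −[ s² log s + (1−s)² log(1−s) + m(s) ]. That is, for the heteroscedasticity weights w_k = m(k/T)^{−2}, the quantity h_T(s; w) converges to h_wls(s) = −[s² log s + (1−s)² log(1−s) + m(s)]. -/
/-!
Write `n = ⌊Ts⌋`. For `k ≤ n` the summand equals `(1 - n/T)² (T/(T - k) - 1)`, and for `k > n` it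
equals `(n/T)² (T/k - 1)`, so the sum is an explicit combination of the harmonic differences
`H_{T-1} - H_{T-1-n}` and `H_{T-1} - H_n`. Since `H_N - log N` converges (to Euler's constant),
`H_b - H_a - log (b/a) → 0` as `a, b → ∞`; with `n/T → s` the two differences tend to
`-log (1 - s)` and `-log s`.
-/

open Filter Finset Real Topology

lemma g_sq_div_m_of_le {a x : ℝ} (hxa : x ≤ a) (hx1 : x < 1) :
    g a x ^ 2 / m x = (1 - a) ^ 2 * ((1 - x)⁻¹ - 1) := by
  have : 0 < 1 - x := by linarith
  rw [g, m, min_eq_right hxa, max_eq_left hxa]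
  field_simp
  ring

lemma g_sq_div_m_of_ge {a x : ℝ} (hax : a ≤ x) (hx0 : 0 < x) (hx1 : x < 1) :
    g a x ^ 2 / m x = a ^ 2 * (x⁻¹ - 1) := by
  have : 0 < 1 - x := by linarith
  rw [g, m, min_eq_left hax, max_eq_right hax]
  field_simp

lemma sum_Ioc_inv_eq_harmonic_sub {a b : ℕ} (h : a ≤ b) :
    ∑ k ∈ Ioc a b, (k : ℝ)⁻¹ = harmonic b - harmonic a := by
  have harmonic_eq (c : ℕ) : (harmonic c : ℝ) = ∑ k ∈ Ioc 0 c, (k : ℝ)⁻¹ := by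
    simp [harmonic_eq_sum_Icc, ← Icc_add_one_left_eq_Ioc]
  rw [harmonic_eq, harmonic_eq, ← sum_Ioc_consecutive _ (Nat.zero_le a) h, add_sub_cancel_left]

lemma sum_Ioc_inv_sub_eq_harmonic_sub {n T : ℕ} (h : n < T) :
    ∑ k ∈ Ioc 0 n, ((T : ℝ) - k)⁻¹ = harmonic (T - 1) - harmonic (T - 1 - n) := by
  induction n with
  | zero => simp
  | succ n ih =>
    have hsucc : T - 1 - n = (T - 1 - (n + 1)) + 1 := by omega
    rw [sum_Ioc_succ_top (Nat.zero_le n), ih (by omega), hsucc, harmonic_succ, ← hsucc]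
    push_cast [Nat.cast_sub (show n ≤ T - 1 by omega), Nat.cast_sub (show 1 ≤ T by omega)]
    ring

lemma tendsto_atTop_of_tendsto_div {a : ℕ → ℕ} {α : ℝ} (hα : 0 < α)
    (ha : Tendsto (fun T : ℕ => (a T : ℝ) / T) atTop (𝓝 α)) : Tendsto a atTop atTop := by
  refine tendsto_natCast_atTop_iff.mp ((ha.pos_mul_atTop hα tendsto_natCast_atTop_atTop).congr' ?_)
  filter_upwards [eventually_ne_atTop 0] with T hT
  field_simp

lemma tendsto_harmonic_sub_harmonic {a b : ℕ → ℕ} {α β : ℝ} (hα : 0 < α) (hβ : 0 < β)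
    (ha : Tendsto (fun T : ℕ => (a T : ℝ) / T) atTop (𝓝 α))
    (hb : Tendsto (fun T : ℕ => (b T : ℝ) / T) atTop (𝓝 β)) :
    Tendsto (fun T => (harmonic (b T) : ℝ) - harmonic (a T)) atTop (𝓝 (log β - log α)) := by
  have ha' := tendsto_atTop_of_tendsto_div hα ha
  have hb' := tendsto_atTop_of_tendsto_div hβ hb
  have hγ := (tendsto_harmonic_sub_log.comp hb').sub (tendsto_harmonic_sub_log.comp ha')
  have hlog := ((continuousAt_log hβ.ne').tendsto.comp hb).sub
    ((continuousAt_log hα.ne').tendsto.comp ha)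
  rw [← zero_add (log β - log α), ← sub_self eulerMascheroniConstant]
  refine (hγ.add hlog).congr' ?_
  filter_upwards [ha'.eventually_ne_atTop 0, hb'.eventually_ne_atTop 0, eventually_ne_atTop 0]
    with T haT hbT hT
  simp only [Function.comp_apply]
  rw [log_div (by positivity) (by positivity), log_div (by positivity) (by positivity)]
  ring

lemma sum_g_sq_div_m_eq_harmonic {n T : ℕ} (h : n < T) :
    ∑ k ∈ Icc 1 (T - 1), g ((n : ℝ) / T) ((k : ℝ) / T) ^ 2 / m ((k : ℝ) / T) =
      T * ((1 - n / T) ^ 2 * (harmonic (T - 1) - harmonic (T - 1 - n) - n / T)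
        + (n / T) ^ 2 * (harmonic (T - 1) - harmonic n - ((T - 1 - n : ℕ) : ℝ) / T)) := by
  have hT : (0 : ℝ) < T := by exact_mod_cast (show 0 < T by omega)
  rw [show Icc 1 (T - 1) = Ioc 0 (T - 1) from Icc_add_one_left_eq_Ioc 0 _,
    ← sum_Ioc_consecutive _ (Nat.zero_le n) (show n ≤ T - 1 by omega)]
  have hleft : ∑ k ∈ Ioc 0 n, g ((n : ℝ) / T) ((k : ℝ) / T) ^ 2 / m ((k : ℝ) / T) =
      ∑ k ∈ Ioc 0 n, (1 - n / T) ^ 2 * (T * ((T : ℝ) - k)⁻¹ - 1) := by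
    refine sum_congr rfl fun k hk => ?_
    obtain ⟨hk0, hkn⟩ := mem_Ioc.mp hk
    have hkT : (k : ℝ) < T := by exact_mod_cast (show k < T by omega)
    rw [g_sq_div_m_of_le (by gcongr) ((div_lt_one hT).2 hkT)]
    congr 2
    field_simp
  have hright : ∑ k ∈ Ioc n (T - 1), g ((n : ℝ) / T) ((k : ℝ) / T) ^ 2 / m ((k : ℝ) / T) =
      ∑ k ∈ Ioc n (T - 1), (n / T : ℝ) ^ 2 * (T * (k : ℝ)⁻¹ - 1) := by
    refine sum_congr rfl fun k hk => ?_
    obtain ⟨hnk, hkT⟩ := mem_Ioc.mp hk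
    have hkT : (k : ℝ) < T := by exact_mod_cast (show k < T by omega)
    have hk0 : (0 : ℝ) < k := by exact_mod_cast (show 0 < k by omega)
    rw [g_sq_div_m_of_ge (by gcongr) (by positivity) ((div_lt_one hT).2 hkT)]
    congr 2
    field_simp
  rw [hleft, hright, ← mul_sum, ← mul_sum, sum_sub_distrib, sum_sub_distrib, ← mul_sum, ← mul_sum,
    sum_Ioc_inv_sub_eq_harmonic_sub h, sum_Ioc_inv_eq_harmonic_sub (show n ≤ T - 1 by omega)]
  simp only [sum_const, Nat.card_Ioc, Nat.sub_zero, nsmul_eq_mul, mul_one]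
  field_simp

/-- Fix `s ∈ (0,1)`. For the heteroscedasticity weights
`w_k = m(k/T)⁻²`, `h_T(s; w) = (1/(T-1)) ∑_{k=1}^{T-1} g(⌊Ts⌋/T, k/T)²/m(k/T)`
converges to `h_wls(s) = -[s² log s + (1-s)² log(1-s) + m(s)]` as `T → ∞`. -/
theorem stmt8 (s : ℝ) (hs : s ∈ Set.Ioo (0 : ℝ) 1) :
    Filter.Tendsto
      (fun T : ℕ =>
        ((T : ℝ) - 1)⁻¹ *
          ∑ k ∈ Finset.Icc 1 (T - 1),
            (g ((⌊(T : ℝ) * s⌋ : ℝ) / T) ((k : ℝ) / T)) ^ 2 / m ((k : ℝ) / T))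
      Filter.atTop
      (nhds (-(s ^ 2 * Real.log s + (1 - s) ^ 2 * Real.log (1 - s) + m s))) := by
  obtain ⟨hs0, hs1⟩ := hs
  set n : ℕ → ℕ := fun T => ⌊(T : ℝ) * s⌋₊ with hn
  have hnT : ∀ᶠ T : ℕ in atTop, n T < T := by
    filter_upwards [eventually_gt_atTop 0] with T hT
    exact (Nat.floor_lt (by positivity)).2 (mul_lt_of_lt_one_right (by positivity) hs1)
  have hn_div : Tendsto (fun T : ℕ => (n T : ℝ) / T) atTop (𝓝 s) := by
    refine ((tendsto_nat_floor_mul_div_atTop hs0.le).comp tendsto_natCast_atTop_atTop).congr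
      fun T => ?_
    simp only [hn, Function.comp_apply, mul_comm s]
  have hinv : Tendsto (fun T : ℕ => (T : ℝ)⁻¹) atTop (𝓝 0) :=
    tendsto_inv_atTop_zero.comp tendsto_natCast_atTop_atTop
  have hpred_div : Tendsto (fun T : ℕ => ((T - 1 : ℕ) : ℝ) / T) atTop (𝓝 1) := by
    rw [← sub_zero (1 : ℝ)]
    refine (tendsto_const_nhds.sub hinv).congr' ?_
    filter_upwards [eventually_gt_atTop 0] with T hT
    rw [Nat.cast_pred hT]
    field_simp
  have hcompl_div : Tendsto (fun T : ℕ => ((T - 1 - n T : ℕ) : ℝ) / T) atTop (𝓝 (1 - s)) := by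
    rw [← sub_zero (1 : ℝ)]
    refine ((tendsto_const_nhds.sub hinv).sub hn_div).congr' ?_
    filter_upwards [hnT] with T hT
    have : (T : ℝ) ≠ 0 := Nat.cast_ne_zero.2 (by omega)
    push_cast [Nat.cast_sub (show n T ≤ T - 1 by omega), Nat.cast_sub (show 1 ≤ T by omega)]
    field_simp
  have hA := tendsto_harmonic_sub_harmonic (sub_pos.2 hs1) one_pos hcompl_div hpred_div
  have hB := tendsto_harmonic_sub_harmonic hs0 one_pos hn_div hpred_div
  have hlim := (hpred_div.inv₀ one_ne_zero).mul
    (((((tendsto_const_nhds (x := (1 : ℝ))).sub hn_div).pow 2).mul (hA.sub hn_div)).add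
      ((hn_div.pow 2).mul (hB.sub hcompl_div)))
  convert hlim.congr' ?_ using 2
  · simp only [m, log_one]
    ring
  · filter_upwards [hnT] with T hT
    rw [← natCast_floor_eq_intCast_floor (by positivity), sum_g_sq_div_m_eq_harmonic hT,
      Nat.cast_pred (show 0 < T by omega), inv_div]
    ring
end

section
/- As T → ∞ over the integers, (1/(T−1)²) · Σ_{k=1}^{T−1} Σ_{ℓ=1}^{T−1} g(k/T, ℓ/T)² / ( m(k/T) · m(ℓ/T) ) converges to π²/3 − 3. That is, for the heteroscedasticity weights w_k = m(k/T)^{−2}, the quantity D_T(w) converges to D_wls = π²/3 − 3. -/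
open Finset Filter Real

lemma g_comm (s t : ℝ) : g s t = g t s := by
  rw [g, g, min_comm, max_comm]

lemma g_sq_div_m_mul_m_of_le {s t : ℝ} (hs : 0 < s) (hst : s ≤ t) (ht : t < 1) :
    g s t ^ 2 / (m s * m t) = s / (1 - s) * ((1 - t) / t) := by
  have h1s : 1 - s ≠ 0 := by linarith
  have h1t : 1 - t ≠ 0 := by linarith
  have ht0 : t ≠ 0 := by linarith
  rw [g, min_eq_left hst, max_eq_right hst, m, m]
  field_simp

lemma sum_range_sum_range_of_symm {M : Type*} [AddCommMonoid M] (F : ℕ → ℕ → M)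
    (hF : ∀ k l, F k l = F l k) (n : ℕ) :
    ∑ k ∈ range n, ∑ l ∈ range n, F k l
      = ∑ k ∈ range n, F k k + 2 • ∑ l ∈ range n, ∑ k ∈ range l, F k l := by
  induction n with
  | zero => simp
  | succ n ih =>
    simp only [sum_range_succ, sum_add_distrib, ih, smul_add, two_smul]
    rw [sum_congr rfl fun k _ => hF n k]
    abel

lemma cast_harmonic_eq_sum_range (n : ℕ) : (harmonic n : ℝ) = ∑ i ∈ range n, ((i : ℝ) + 1)⁻¹ := by
  simp [harmonic]

lemma sum_range_inv_sub {n l : ℕ} (hl : l ≤ n) :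
    ∑ k ∈ range l, ((n : ℝ) - k)⁻¹ = harmonic n - harmonic (n - l) := by
  induction l with
  | zero => simp
  | succ l ih =>
    obtain ⟨j, rfl⟩ := Nat.exists_eq_add_of_le hl
    rw [sum_range_succ, ih (by omega), show l + 1 + j - l = j + 1 by omega,
      show l + 1 + j - (l + 1) = j by omega, harmonic_succ]
    push_cast
    ring

lemma sum_range_inv_succ_mul_inv_sub (n : ℕ) :
    ∑ l ∈ range n, ((l : ℝ) + 1)⁻¹ * ((n : ℝ) - l)⁻¹ = 2 * harmonic n / (n + 1) := by
  have partial_fractions : ∀ l ∈ range n,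
      ((l : ℝ) + 1)⁻¹ * ((n : ℝ) - l)⁻¹ = (((l : ℝ) + 1)⁻¹ + ((n : ℝ) - l)⁻¹) / (n + 1) := by
    intro l hl
    have : (l : ℝ) < n := by exact_mod_cast mem_range.mp hl
    have : (n : ℝ) - l ≠ 0 := by linarith
    field_simp
    ring
  rw [sum_congr rfl partial_fractions, ← sum_div, sum_add_distrib, ← cast_harmonic_eq_sum_range,
    sum_range_inv_sub le_rfl, Nat.sub_self, harmonic_zero]
  push_cast
  ring

noncomputable def sumInvSq (n : ℕ) : ℝ := ∑ i ∈ range n, (((i : ℝ) + 1) ^ 2)⁻¹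

lemma sumInvSq_succ (n : ℕ) : sumInvSq (n + 1) = sumInvSq n + (((n : ℝ) + 1) ^ 2)⁻¹ :=
  sum_range_succ _ n

-- The convolution identity `∑_{a,b ≥ 1, a+b ≤ n+1} 1/(ab) = H_{n+1}² - H⁽²⁾_{n+1}`, with `a = l+1`.
lemma sum_range_harmonic_sub_div (n : ℕ) :
    ∑ l ∈ range n, (harmonic (n - l) : ℝ) / (l + 1) = harmonic (n + 1) ^ 2 - sumInvSq (n + 1) := by
  induction n with
  | zero => simp [sumInvSq]
  | succ n ih =>
    have step : ∀ l ∈ range (n + 1), (harmonic (n + 1 - l) : ℝ) / (l + 1)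
        = harmonic (n - l) / (l + 1) + ((l : ℝ) + 1)⁻¹ * (((n + 1 : ℕ) : ℝ) - l)⁻¹ := by
      intro l hl
      have hln : l ≤ n := Nat.lt_succ_iff.mp (mem_range.mp hl)
      rw [show n + 1 - l = n - l + 1 by omega, harmonic_succ]
      push_cast [Nat.cast_sub hln]
      ring
    rw [sum_congr rfl step, sum_add_distrib, sum_range_succ, ih, sum_range_inv_succ_mul_inv_sub,
      Nat.sub_self, harmonic_zero, sumInvSq_succ (n + 1), harmonic_succ (n + 1)]
    push_cast
    field_simp
    ring

lemma sum_triangle_inv_sub_mul_inv_succ (n : ℕ) :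
    ∑ l ∈ range n, ∑ k ∈ range l, ((n : ℝ) - k)⁻¹ * ((l : ℝ) + 1)⁻¹
      = sumInvSq n - 2 * harmonic n / (n + 1) := by
  have inner : ∀ l ∈ range n, ∑ k ∈ range l, ((n : ℝ) - k)⁻¹ * ((l : ℝ) + 1)⁻¹
      = harmonic n * ((l : ℝ) + 1)⁻¹ - harmonic (n - l) / (l + 1) := by
    intro l hl
    rw [← sum_mul, sum_range_inv_sub (mem_range.mp hl).le]
    ring
  rw [sum_congr rfl inner, sum_sub_distrib, ← mul_sum, ← cast_harmonic_eq_sum_range,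
    sum_range_harmonic_sub_div, sumInvSq_succ, harmonic_succ]
  push_cast
  field_simp
  ring

lemma sum_triangle_inv_succ (n : ℕ) :
    ∑ l ∈ range n, ∑ _k ∈ range l, ((l : ℝ) + 1)⁻¹ = n - harmonic n := by
  have inner : ∀ l ∈ range n, ∑ _k ∈ range l, ((l : ℝ) + 1)⁻¹ = 1 - ((l : ℝ) + 1)⁻¹ := by
    intro l _
    rw [sum_const, card_range, nsmul_eq_mul]
    field_simp
    ring
  rw [sum_congr rfl inner, sum_sub_distrib, ← cast_harmonic_eq_sum_range]
  simp

lemma sum_triangle_inv_sub (n : ℕ) :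
    ∑ l ∈ range n, ∑ k ∈ range l, ((n : ℝ) - k)⁻¹ = n - harmonic n := by
  have rows : ∀ k ∈ range n, ∑ _l ∈ Ico (k + 1) n, ((n : ℝ) - k)⁻¹ = 1 - ((n : ℝ) - k)⁻¹ := by
    intro k hk
    have hkn : k < n := mem_range.mp hk
    have : (n : ℝ) - k ≠ 0 := by
      have : (k : ℝ) < n := by exact_mod_cast hkn
      linarith
    rw [sum_const, Nat.card_Ico, nsmul_eq_mul, Nat.cast_sub hkn]
    field_simp
    push_cast
    ring
  simp only [range_eq_Ico]
  rw [← sum_Ico_Ico_comm', ← range_eq_Ico, sum_congr rfl rows, sum_sub_distrib,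
    sum_range_inv_sub le_rfl]
  simp

lemma sum_Icc_one_eq_sum_range {M : Type*} [AddCommMonoid M] (f : ℕ → M) (n : ℕ) :
    ∑ k ∈ Icc 1 n, f k = ∑ k ∈ range n, f (k + 1) := by
  rw [range_eq_Ico, sum_Ico_add' f 0 n 1, zero_add, Ico_add_one_right_eq_Icc]

lemma g_sq_div_m_mul_m_grid {n k l : ℕ} (hkl : k ≤ l) (hl : l < n) :
    g ((k + 1) / (n + 1)) ((l + 1) / (n + 1)) ^ 2 / (m ((k + 1) / (n + 1)) * m ((l + 1) / (n + 1)))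
      = ((n + 1) / (n - k) - 1) * ((n + 1) / (l + 1) - 1) := by
  have hkl' : (k : ℝ) ≤ l := by exact_mod_cast hkl
  have hln : (l : ℝ) < n := by exact_mod_cast hl
  have hnk : (n : ℝ) - k ≠ 0 := by linarith
  have hnk' : (n : ℝ) + 1 - (k + 1) ≠ 0 := by linarith
  rw [g_sq_div_m_mul_m_of_le (by positivity) (by gcongr)
    (by rw [div_lt_one (by positivity)]; linarith)]
  field_simp
  ring

theorem sum_Icc_sum_Icc_g_sq_div_m_mul_m (n : ℕ) :
    ∑ k ∈ Icc 1 n, ∑ l ∈ Icc 1 n,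
        g (k / (n + 1)) (l / (n + 1)) ^ 2 / (m (k / (n + 1)) * m (l / (n + 1)))
      = 2 * ((n : ℝ) + 1) ^ 2 * sumInvSq n - n * (3 * n + 4) := by
  have gauss : ∑ l ∈ range n, (l : ℝ) = n * (n - 1) / 2 := by
    induction n with
    | zero => simp
    | succ n ih =>
      rw [sum_range_succ, ih]
      push_cast
      ring
  set K : ℕ → ℕ → ℝ := fun k l =>
    g ((k + 1) / (n + 1)) ((l + 1) / (n + 1)) ^ 2 / (m ((k + 1) / (n + 1)) * m ((l + 1) / (n + 1)))
  have reindex : ∑ k ∈ Icc 1 n, ∑ l ∈ Icc 1 n,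
      g (k / (n + 1)) (l / (n + 1)) ^ 2 / (m (k / (n + 1)) * m (l / (n + 1)))
        = ∑ k ∈ range n, ∑ l ∈ range n, K k l := by
    simp only [sum_Icc_one_eq_sum_range, K, Nat.cast_add_one]
  have diag : ∀ k ∈ range n, K k k = 1 := by
    intro k hk
    have hkn : (k : ℝ) < n := by exact_mod_cast mem_range.mp hk
    have : (n : ℝ) - k ≠ 0 := by linarith
    simp only [K]
    rw [g_sq_div_m_mul_m_grid le_rfl (mem_range.mp hk)]
    field_simp
    ring
  have off : ∀ l ∈ range n, ∀ k ∈ range l,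
      K k l = ((n : ℝ) + 1) ^ 2 * (((n : ℝ) - k)⁻¹ * ((l : ℝ) + 1)⁻¹)
        - (n + 1) * ((n : ℝ) - k)⁻¹ - (n + 1) * ((l : ℝ) + 1)⁻¹ + 1 := by
    intro l hl k hk
    simp only [K]
    rw [g_sq_div_m_mul_m_grid (mem_range.mp hk).le (mem_range.mp hl)]
    ring
  rw [reindex, sum_range_sum_range_of_symm K (fun k l => by simp only [K]; rw [g_comm, mul_comm]) n,
    sum_congr rfl diag, sum_congr rfl fun l hl => sum_congr rfl (off l hl)]
  simp only [sum_add_distrib, sum_sub_distrib, ← mul_sum]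
  rw [sum_triangle_inv_sub_mul_inv_succ, sum_triangle_inv_sub, sum_triangle_inv_succ]
  simp only [sum_const, card_range, nsmul_eq_mul, mul_one, gauss]
  field_simp
  ring

lemma tendsto_sumInvSq : Tendsto sumInvSq atTop (nhds (π ^ 2 / 6)) := by
  have h := (hasSum_nat_add_iff' 1).mpr hasSum_zeta_two
  simp only [range_one, sum_singleton, Nat.cast_zero, Nat.cast_add_one, one_div, ne_eq,
    OfNat.ofNat_ne_zero, not_false_eq_true, zero_pow, inv_zero, sub_zero] at h
  exact h.tendsto_sum_nat

/-- For the heteroscedasticity weights `w_k = m(k/T)⁻²`,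
`D_T(w) = (1/(T-1)²) ∑_{k=1}^{T-1} ∑_{ℓ=1}^{T-1} g(k/T,ℓ/T)²/(m(k/T) m(ℓ/T))`
converges to `D_wls = π²/3 - 3` as `T → ∞`. -/
theorem stmt9 :
    Filter.Tendsto
      (fun T : ℕ =>
        (((T : ℝ) - 1) ^ 2)⁻¹ *
          ∑ k ∈ Finset.Icc 1 (T - 1), ∑ l ∈ Finset.Icc 1 (T - 1),
            (g ((k : ℝ) / T) ((l : ℝ) / T)) ^ 2 / (m ((k : ℝ) / T) * m ((l : ℝ) / T)))
      Filter.atTop (nhds (Real.pi ^ 2 / 3 - 3)) := by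
  rw [← tendsto_add_atTop_iff_nat 1]
  simp only [Nat.add_sub_cancel, Nat.cast_add_one, add_sub_cancel_right,
    sum_Icc_sum_Icc_g_sq_div_m_mul_m]
  have hinv : Tendsto (fun n : ℕ => (n : ℝ)⁻¹) atTop (nhds 0) := tendsto_inv_atTop_nhds_zero_nat
  have h := ((((tendsto_const_nhds (x := (1 : ℝ))).add hinv).pow 2).mul
    (tendsto_sumInvSq.const_mul 2)).sub ((tendsto_const_nhds (x := (3 : ℝ))).add (hinv.const_mul 4))
  rw [show ((1 : ℝ) + 0) ^ 2 * (2 * (π ^ 2 / 6)) - (3 + 4 * 0) = π ^ 2 / 3 - 3 by ring] at h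
  refine h.congr' ?_
  filter_upwards [eventually_ne_atTop 0] with n hn
  field_simp
end

section
/- Let T ≥ 2 be an integer and Y_1, …, Y_T arbitrary real numbers. Let u ∈ (0,1) be such that 1 ≤ ⌊Tu⌋ ≤ T−1. Define the estimated change size δ̂(u) = (T−⌊Tu⌋)^{−1} Σ_{t=⌊Tu⌋+1}^T Y_t − ⌊Tu⌋^{−1} Σ_{t=1}^{⌊Tu⌋} Y_t, the centered data Y̌_t(u) = Y_t − δ̂(u)·1(t > ⌊Tu⌋), and let Ž(s,u) denote the CUSUM process of the centered data Y̌_·(u). Then for every s ∈ [0,1], Ž(s,u) = Z(s) − ( g_T(s,u) / m_T(u) ) · Z(u), where Z is the CUSUM process of the original data Y. In particular, δ̂(u) = −Z(u)/(√T · m_T(u)). -/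
/-- `m_T(s) = (⌊Ts⌋/T)(1 - ⌊Ts⌋/T)`. -/
noncomputable def mT (T : ℕ) (s : ℝ) : ℝ :=
  ((⌊(T : ℝ) * s⌋ : ℝ) / T) * (1 - (⌊(T : ℝ) * s⌋ : ℝ) / T)

/-- `g_T(s,u) = g(⌊Ts⌋/T, ⌊Tu⌋/T)`. -/
noncomputable def gT (T : ℕ) (s u : ℝ) : ℝ :=
  g ((⌊(T : ℝ) * s⌋ : ℝ) / T) ((⌊(T : ℝ) * u⌋ : ℝ) / T)

/-- CUSUM process of the data `Y 1, …, Y T`: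
`Z(s) = T^{-1/2} ∑_{k=1}^{⌊Ts⌋} (Y k - Ȳ_T)`. -/
noncomputable def cusum (T : ℕ) (Y : ℕ → ℝ) (s : ℝ) : ℝ :=
  (Real.sqrt T)⁻¹ * ∑ k ∈ Finset.Icc 1 (⌊(T : ℝ) * s⌋.toNat),
    (Y k - (T : ℝ)⁻¹ * ∑ t ∈ Finset.Icc 1 T, Y t)

/-- For arbitrary reals `Y 1, …, Y T` and `u ∈ (0,1)` with
`1 ≤ ⌊Tu⌋ ≤ T - 1`, the CUSUM process `Ž(·,u)` of the change-centered data
`Y̌ t = Y t - δ̂(u)·1(t > ⌊Tu⌋)` satisfies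
`Ž(s,u) = Z(s) - (g_T(s,u)/m_T(u)) Z(u)` for all `s ∈ [0,1]`, and
`δ̂(u) = -Z(u)/(√T m_T(u))`. -/
theorem stmt12 (T : ℕ) (hT : 2 ≤ T) (Y : ℕ → ℝ)
    (u : ℝ) (hu : u ∈ Set.Ioo (0 : ℝ) 1)
    (hu1 : 1 ≤ ⌊(T : ℝ) * u⌋) (hu2 : ⌊(T : ℝ) * u⌋ ≤ (T : ℤ) - 1)
    (δhat : ℝ)
    (hδ : δhat = ((T : ℝ) - (⌊(T : ℝ) * u⌋ : ℝ))⁻¹ *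
          ∑ t ∈ Finset.Icc (⌊(T : ℝ) * u⌋.toNat + 1) T, Y t
        - ((⌊(T : ℝ) * u⌋ : ℝ))⁻¹ * ∑ t ∈ Finset.Icc 1 (⌊(T : ℝ) * u⌋.toNat), Y t)
    (Ycheck : ℕ → ℝ)
    (hYc : ∀ t, Ycheck t = Y t - δhat * (if ⌊(T : ℝ) * u⌋.toNat < t then 1 else 0)) :
    (∀ s ∈ Set.Icc (0 : ℝ) 1,
        cusum T Ycheck s = cusum T Y s - (gT T s u / mT T u) * cusum T Y u)
      ∧ δhat = -(cusum T Y u) / (Real.sqrt T * mT T u) := by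
  obtain ⟨hu0, hu1'⟩ := hu
  set K : ℕ := ⌊(T : ℝ) * u⌋.toNat with hK
  have hKZ : (0:ℤ) ≤ ⌊(T : ℝ) * u⌋ := le_trans zero_le_one hu1
  have hKcast : ((⌊(T : ℝ) * u⌋ : ℤ) : ℝ) = (K : ℝ) := by
    rw [hK]; exact_mod_cast (Int.toNat_of_nonneg hKZ).symm
  have hK1 : 1 ≤ K := by omega
  have hKT : K + 1 ≤ T := by omega
  have hT0 : (0:ℝ) < (T:ℝ) := by positivity
  have hTne : (T:ℝ) ≠ 0 := ne_of_gt hT0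
  have hsq : Real.sqrt T * Real.sqrt T = (T:ℝ) := Real.mul_self_sqrt (le_of_lt hT0)
  have hsne : Real.sqrt (T:ℝ) ≠ 0 := by positivity
  have hKne : ((K:ℝ)) ≠ 0 := by positivity
  have hTKne : (T:ℝ) - (K:ℝ) ≠ 0 := by
    have : (K:ℝ) < (T:ℝ) := by exact_mod_cast hKT
    linarith
  -- abbreviations
  set S : ℝ := ∑ t ∈ Finset.Icc 1 T, Y t with hS
  set SK : ℝ := ∑ t ∈ Finset.Icc 1 K, Y t with hSK
  -- the tail sum
  have hsplit : ∑ t ∈ Finset.Icc (K + 1) T, Y t = S - SK := by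
    have h := Finset.sum_Ioc_consecutive Y (Nat.zero_le K) (by omega : K ≤ T)
    rw [hS, hSK, ← (Finset.Icc_add_one_left_eq_Ioc 0 T : Finset.Icc 1 T = _), ← (Finset.Icc_add_one_left_eq_Ioc 0 K : Finset.Icc 1 K = _), ← Finset.Icc_add_one_left_eq_Ioc K T, zero_add] at *
    linarith [h]
  -- δhat in clean form
  have hδ' : δhat = ((T:ℝ) - (K:ℝ))⁻¹ * (S - SK) - ((K:ℝ))⁻¹ * SK := by
    rw [hδ, hKcast, hsplit]
  -- generic cusum expansion
  have hcus : ∀ (W : ℕ → ℝ) (r : ℝ), cusum T W r =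
      (Real.sqrt T)⁻¹ * ((∑ k ∈ Finset.Icc 1 (⌊(T:ℝ)*r⌋.toNat), W k) -
        ((⌊(T:ℝ)*r⌋.toNat : ℕ) : ℝ) * ((T:ℝ)⁻¹ * ∑ t ∈ Finset.Icc 1 T, W t)) := by
    intro W r
    unfold cusum
    rw [Finset.sum_sub_distrib, Finset.sum_const, Nat.card_Icc]
    simp [nsmul_eq_mul]
  -- indicator sums
  have hind : ∀ n : ℕ, ∑ t ∈ Finset.Icc 1 n, (δhat * (if K < t then (1:ℝ) else 0))
      = δhat * ((n - K : ℕ) : ℝ) := by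
    intro n
    rw [← Finset.mul_sum]
    congr 1
    rw [Finset.sum_boole]
    congr 1
    have : (Finset.Icc 1 n).filter (fun t => K < t) = Finset.Icc (K+1) n := by
      ext t; simp only [Finset.mem_filter, Finset.mem_Icc]; omega
    rw [this, Nat.card_Icc]
    omega
  -- Ycheck sums
  have hYsum : ∀ n : ℕ, ∑ t ∈ Finset.Icc 1 n, Ycheck t
      = (∑ t ∈ Finset.Icc 1 n, Y t) - δhat * ((n - K : ℕ) : ℝ) := by
    intro n
    simp only [hYc]
    rw [Finset.sum_sub_distrib, hind n]
  have hYT : ∑ t ∈ Finset.Icc 1 T, Ycheck t = S - δhat * ((T:ℝ) - (K:ℝ)) := by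
    rw [hYsum T, hS]
    congr 1
    rw [Nat.cast_sub (by omega)]
  -- cusum of Y at u
  have hZU : cusum T Y u = (Real.sqrt T)⁻¹ * (SK - (K:ℝ) * ((T:ℝ)⁻¹ * S)) := by
    rw [hcus Y u, ← hK, ← hS, ← hSK]
  -- mT
  have hmT : mT T u = ((K:ℝ)/T) * (1 - (K:ℝ)/T) := by
    unfold mT; rw [hKcast]
  constructor
  · intro s hs
    obtain ⟨hs0, hs1⟩ := hs
    set M : ℕ := ⌊(T : ℝ) * s⌋.toNat with hM
    have hMZ : (0:ℤ) ≤ ⌊(T : ℝ) * s⌋ := Int.floor_nonneg.2 (by positivity)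
    have hMcast : ((⌊(T : ℝ) * s⌋ : ℤ) : ℝ) = (M : ℝ) := by
      rw [hM]; exact_mod_cast (Int.toNat_of_nonneg hMZ).symm
    have hMT : M ≤ T := by
      have h1 : ((⌊(T : ℝ) * s⌋ : ℤ) : ℝ) ≤ (T:ℝ) := by
        calc ((⌊(T : ℝ) * s⌋ : ℤ) : ℝ) ≤ (T:ℝ) * s := Int.floor_le _
        _ ≤ (T:ℝ) * 1 := by nlinarith
        _ = (T:ℝ) := by ring
      have h2 : ⌊(T : ℝ) * s⌋ ≤ (T:ℤ) := by exact_mod_cast h1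
      omega
    have hZS : cusum T Y s = (Real.sqrt T)⁻¹ *
        ((∑ t ∈ Finset.Icc 1 M, Y t) - (M:ℝ) * ((T:ℝ)⁻¹ * S)) := by
      rw [hcus Y s, ← hM, ← hS]
    have hZcS : cusum T Ycheck s = (Real.sqrt T)⁻¹ *
        (((∑ t ∈ Finset.Icc 1 M, Y t) - δhat * ((M - K : ℕ) : ℝ))
          - (M:ℝ) * ((T:ℝ)⁻¹ * (S - δhat * ((T:ℝ) - (K:ℝ))))) := by
      rw [hcus Ycheck s, ← hM, hYsum M, hYT]
    have hgT : gT T s u = min ((M:ℝ)/T) ((K:ℝ)/T) * (1 - max ((M:ℝ)/T) ((K:ℝ)/T)) := by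
      unfold gT g; rw [hKcast, hMcast]
    rw [hZcS, hZS, hZU, hgT, hmT, hδ']
    rcases le_or_gt M K with h | h
    · have hmin : min ((M:ℝ)/T) ((K:ℝ)/T) = (M:ℝ)/T := by
        have : (M:ℝ) ≤ (K:ℝ) := by exact_mod_cast h
        apply min_eq_left; gcongr
      have hmax : max ((M:ℝ)/T) ((K:ℝ)/T) = (K:ℝ)/T := by
        have : (M:ℝ) ≤ (K:ℝ) := by exact_mod_cast h
        apply max_eq_right; gcongr
      have hc0 : ((M - K : ℕ) : ℝ) = 0 := by
        rw [Nat.sub_eq_zero_of_le h]; simp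
      rw [hmin, hmax, hc0]
      field_simp
      ring
    · have hmin : min ((M:ℝ)/T) ((K:ℝ)/T) = (K:ℝ)/T := by
        have : (K:ℝ) ≤ (M:ℝ) := by exact_mod_cast h.le
        apply min_eq_right; gcongr
      have hmax : max ((M:ℝ)/T) ((K:ℝ)/T) = (M:ℝ)/T := by
        have : (K:ℝ) ≤ (M:ℝ) := by exact_mod_cast h.le
        apply max_eq_left; gcongr
      have hc : ((M - K : ℕ) : ℝ) = (M:ℝ) - (K:ℝ) := by
        rw [Nat.cast_sub h.le]
      rw [hmin, hmax, hc]
      field_simp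
      ring
  · rw [hδ', hZU, hmT]
    field_simp
    linear_combination ((K:ℝ)*S - SK*(T:ℝ)) * hsq
end

section
/- Let T ≥ 2 be an integer and let Y_t = μ + e_t, t = 1,…,T, where μ is a real constant and e_1,…,e_T are independent square-integrable real random variables with mean 0 and common variance σ². Let u ∈ (0,1) satisfy 1 ≤ ⌊Tu⌋ ≤ T−1, and let Ž(s,u) be the CUSUM process of the centered data Y̌_t(u) = Y_t − δ̂(u)·1(t > ⌊Tu⌋), where δ̂(u) = (T−⌊Tu⌋)^{−1} Σ_{t=⌊Tu⌋+1}^T Y_t − ⌊Tu⌋^{−1} Σ_{t=1}^{⌊Tu⌋} Y_t. Then for every s ∈ [0,1], E[ Ž(s,u)² ] = σ² · ( m_T(s) − g_T(s,u)² / m_T(u) ). -/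
open MeasureTheory ProbabilityTheory Finset

theorem integral_sq_sum_mul_of_iIndepFun {Ω ι : Type*} [MeasurableSpace Ω] {P : Measure Ω}
    [IsProbabilityMeasure P] {S : Finset ι} {e : ι → Ω → ℝ} {σ2 : ℝ}
    (hindep : iIndepFun (fun k : S => e k) P) (hL2 : ∀ k ∈ S, MemLp (e k) 2 P)
    (hmean : ∀ k ∈ S, ∫ ω, e k ω ∂P = 0) (hvar : ∀ k ∈ S, ∫ ω, e k ω ^ 2 ∂P = σ2)
    (c : ι → ℝ) :
    ∫ ω, (∑ k ∈ S, c k * e k ω) ^ 2 ∂P = σ2 * ∑ k ∈ S, c k ^ 2 := by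
  set X : ι → Ω → ℝ := fun k ω => c k * e k ω
  have hX : ∀ k ∈ S, MemLp (X k) 2 P := fun k hk => (hL2 k hk).const_mul (c k)
  have hpair : Set.Pairwise ↑S fun i j => X i ⟂ᵢ[P] X j := fun i hi j hj hij =>
    (hindep.indepFun (i := ⟨i, hi⟩) (j := ⟨j, hj⟩) (by simpa using hij)).comp
      (measurable_const_mul (c i)) (measurable_const_mul (c j))
  have hmean_sum : ∫ ω, ∑ k ∈ S, c k * e k ω ∂P = 0 := by
    rw [integral_finsetSum _ fun k hk => ((hL2 k hk).integrable one_le_two).const_mul _]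
    exact sum_eq_zero fun k hk => by rw [integral_const_mul, hmean k hk, mul_zero]
  rw [← variance_of_integral_eq_zero (memLp_finsetSum S hX).aemeasurable hmean_sum,
    ← sum_fn, IndepFun.variance_sum hX hpair, mul_sum]
  refine sum_congr rfl fun k hk => ?_
  rw [variance_const_mul, variance_of_integral_eq_zero (hL2 k hk).aemeasurable (hmean k hk),
    hvar k hk, mul_comm]

theorem sum_Icc_ite_le (f : ℕ → ℝ) (i j : ℕ) :
    ∑ k ∈ Icc 1 j, (if k ≤ i then f k else 0) = ∑ k ∈ Icc 1 (min i j), f k := by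
  rw [← sum_filter]
  congr 1
  ext k
  simp only [mem_filter, mem_Icc]
  omega

theorem sum_Icc_ite_lt (f : ℕ → ℝ) (i j : ℕ) :
    ∑ k ∈ Icc 1 j, (if i < k then f k else 0)
      = ∑ k ∈ Icc 1 j, f k - ∑ k ∈ Icc 1 (min i j), f k := by
  rw [← sum_Icc_ite_le, ← sum_sub_distrib]
  refine sum_congr rfl fun k _ => ?_
  split_ifs <;> first | omega | ring

noncomputable def cusumWeight (T n m k : ℕ) : ℝ :=
  (if k ≤ m then 1 else 0) - (min n m : ℕ) / n * (if k ≤ n then 1 else 0)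
    - (m - (min n m : ℕ)) / (T - n) * (if n < k then 1 else 0)

theorem sum_Icc_cusumWeight_mul (T n m j : ℕ) (y : ℕ → ℝ) :
    ∑ k ∈ Icc 1 j, cusumWeight T n m k * y k
      = ∑ k ∈ Icc 1 (min m j), y k - (min n m : ℕ) / n * ∑ k ∈ Icc 1 (min n j), y k
        - (m - (min n m : ℕ)) / (T - n)
          * (∑ k ∈ Icc 1 j, y k - ∑ k ∈ Icc 1 (min n j), y k) := by
  simp only [cusumWeight, sub_mul, mul_assoc, ite_mul, one_mul, zero_mul, sum_sub_distrib,
    ← mul_sum, sum_Icc_ite_le, sum_Icc_ite_lt]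

theorem sum_Icc_cusumWeight (T n m j : ℕ) :
    ∑ k ∈ Icc 1 j, cusumWeight T n m k
      = min m j - (min n m : ℕ) / n * min n j - (m - (min n m : ℕ)) / (T - n) * (j - min n j) := by
  simpa using sum_Icc_cusumWeight_mul T n m j 1

theorem sum_cusumWeight {T n m : ℕ} (hn : 0 < n) (hnT : n < T) (hmT : m ≤ T) :
    ∑ k ∈ Icc 1 T, cusumWeight T n m k = 0 := by
  have hn' : (n : ℝ) ≠ 0 := by positivity
  have hTn : (T : ℝ) - n ≠ 0 := sub_ne_zero.2 (by exact_mod_cast hnT.ne')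
  rw [sum_Icc_cusumWeight, min_eq_left hmT, min_eq_left hnT.le]
  field_simp
  ring

theorem sum_cusumWeight_sq {T n m : ℕ} (hn : 0 < n) (hnT : n < T) (hmT : m ≤ T) :
    ∑ k ∈ Icc 1 T, cusumWeight T n m k ^ 2
      = m - (min n m : ℕ) ^ 2 / n - (m - (min n m : ℕ)) ^ 2 / (T - n) := by
  have hn' : (n : ℝ) ≠ 0 := by positivity
  have hTn : (T : ℝ) - n ≠ 0 := sub_ne_zero.2 (by exact_mod_cast hnT.ne')
  have hfirst : ∑ k ∈ Icc 1 n, cusumWeight T n m k = 0 := by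
    rw [sum_Icc_cusumWeight, min_self, min_comm m n]
    field_simp
    ring
  simp only [sq, sum_Icc_cusumWeight_mul, min_eq_left hmT, min_eq_left hnT.le, min_self, hfirst,
    sum_cusumWeight hn hnT hmT, sum_Icc_cusumWeight]
  field_simp
  ring

theorem sum_Icc_add_one_eq_sub (y : ℕ → ℝ) {n T : ℕ} (h : n ≤ T) :
    ∑ k ∈ Icc (n + 1) T, y k = ∑ k ∈ Icc 1 T, y k - ∑ k ∈ Icc 1 n, y k := by
  rw [← min_eq_left h, ← sum_Icc_ite_lt, ← sum_filter, min_eq_left h]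
  congr 1
  ext k
  simp only [mem_filter, mem_Icc]
  omega

theorem cusum_adjusted_eq_sum_cusumWeight_mul {T n : ℕ} (hn : 0 < n) (hnT : n < T) (y : ℕ → ℝ) {s : ℝ}
    (hs : ⌊(T : ℝ) * s⌋.toNat ≤ T) :
    cusum T (fun t => y t - ((T - n : ℝ)⁻¹ * ∑ k ∈ Icc (n + 1) T, y k
        - (n : ℝ)⁻¹ * ∑ k ∈ Icc 1 n, y k) * (if n < t then 1 else 0)) s
      = (Real.sqrt T)⁻¹ * ∑ k ∈ Icc 1 T, cusumWeight T n ⌊(T : ℝ) * s⌋.toNat k * y k := by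
  have hn' : (n : ℝ) ≠ 0 := by positivity
  have hTn : (T : ℝ) - n ≠ 0 := sub_ne_zero.2 (by exact_mod_cast hnT.ne')
  have hT : (T : ℝ) ≠ 0 := by exact_mod_cast (hn.trans hnT).ne'
  rw [cusum, sum_Icc_cusumWeight_mul, sum_Icc_add_one_eq_sub y hnT.le]
  generalize ⌊(T : ℝ) * s⌋.toNat = m at *
  congr 1
  simp only [sum_sub_distrib, sum_const, ← mul_sum, sum_Icc_ite_lt, min_eq_left hnT.le,
    min_eq_left hs, Nat.card_Icc, Nat.add_sub_cancel, nsmul_eq_mul]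
  field_simp
  ring

theorem mul_one_sub_sub_g_sq_div {x y : ℝ} (hy0 : 0 < y) (hy1 : y < 1) :
    x * (1 - x) - g x y ^ 2 / (y * (1 - y))
      = x - min x y ^ 2 / y - (x - min x y) ^ 2 / (1 - y) := by
  have hy1' : 1 - y ≠ 0 := by linarith
  rcases le_total x y with h | h
  · rw [g, min_eq_left h, max_eq_right h]
    field_simp
    ring
  · rw [g, min_eq_right h, max_eq_left h]
    field_simp
    ring

theorem inv_mul_sum_cusumWeight_sq {T n m : ℕ} (hn : 0 < n) (hnT : n < T) (hmT : m ≤ T) :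
    (T : ℝ)⁻¹ * ∑ k ∈ Icc 1 T, cusumWeight T n m k ^ 2
      = m / T * (1 - m / T) - g (m / T) (n / T) ^ 2 / (n / T * (1 - n / T)) := by
  have hT : (0 : ℝ) < T := by exact_mod_cast hn.trans hnT
  have hTn : (T : ℝ) - n ≠ 0 := sub_ne_zero.2 (by exact_mod_cast hnT.ne')
  rw [mul_one_sub_sub_g_sq_div (by positivity) ((div_lt_one hT).2 (by exact_mod_cast hnT)),
    min_div_div_right hT.le, ← Nat.cast_min, min_comm, sum_cusumWeight_sq hn hnT hmT]
  field_simp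

theorem stmt13_general {Ω : Type*} [MeasurableSpace Ω] (P : Measure Ω) [IsProbabilityMeasure P]
    (T : ℕ) (μ σ2 : ℝ) (e : ℕ → Ω → ℝ)
    (hindep : iIndepFun
      (fun k : (Finset.Icc 1 T) => e (k : ℕ)) P)
    (hL2 : ∀ k ∈ Finset.Icc 1 T, MemLp (e k) 2 P)
    (hmean : ∀ k ∈ Finset.Icc 1 T, ∫ ω, e k ω ∂P = 0)
    (hvar : ∀ k ∈ Finset.Icc 1 T, ∫ ω, (e k ω) ^ 2 ∂P = σ2)
    (Y : ℕ → Ω → ℝ) (hY : ∀ t ω, Y t ω = μ + e t ω)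
    (u : ℝ)
    (hu1 : 1 ≤ ⌊(T : ℝ) * u⌋) (hu2 : ⌊(T : ℝ) * u⌋ ≤ (T : ℤ) - 1)
    (δhat : Ω → ℝ)
    (hδ : ∀ ω, δhat ω = ((T : ℝ) - (⌊(T : ℝ) * u⌋ : ℝ))⁻¹ *
          ∑ t ∈ Finset.Icc (⌊(T : ℝ) * u⌋.toNat + 1) T, Y t ω
        - ((⌊(T : ℝ) * u⌋ : ℝ))⁻¹ * ∑ t ∈ Finset.Icc 1 (⌊(T : ℝ) * u⌋.toNat), Y t ω) :
    ∀ s ∈ Set.Icc (0 : ℝ) 1,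
      ∫ ω, (cusum T
          (fun t => Y t ω - δhat ω * (if ⌊(T : ℝ) * u⌋.toNat < t then 1 else 0)) s) ^ 2 ∂P
        = σ2 * (mT T s - (gT T s u) ^ 2 / mT T u) := by
  intro s ⟨hs0, hs1⟩
  have hn_floor : (0 : ℤ) ≤ ⌊(T : ℝ) * u⌋ := by omega
  set n := ⌊(T : ℝ) * u⌋.toNat
  have hn_cast : ((⌊(T : ℝ) * u⌋ : ℤ) : ℝ) = n := by
    exact_mod_cast (Int.toNat_of_nonneg hn_floor).symm
  have hn : 0 < n := by omega
  have hnT : n < T := by omega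
  have hm_cast : ((⌊(T : ℝ) * s⌋ : ℤ) : ℝ) = ⌊(T : ℝ) * s⌋.toNat := by
    rw [Int.floor_toNat, natCast_floor_eq_intCast_floor (by positivity)]
  have hmT : ⌊(T : ℝ) * s⌋.toNat ≤ T := by
    rw [Int.floor_toNat]
    exact Nat.floor_le_of_le (by nlinarith)
  have hZ : ∀ ω, cusum T (fun t => Y t ω - δhat ω * (if n < t then 1 else 0)) s
      = (Real.sqrt T)⁻¹ * ∑ k ∈ Icc 1 T, cusumWeight T n ⌊(T : ℝ) * s⌋.toNat k * e k ω := by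
    intro ω
    rw [hδ ω, hn_cast, cusum_adjusted_eq_sum_cusumWeight_mul hn hnT _ hmT]
    simp only [hY, mul_add, sum_add_distrib, ← sum_mul, sum_cusumWeight hn hnT hmT,
      zero_mul, zero_add]
  simp_rw [hZ, mul_pow, integral_const_mul, integral_sq_sum_mul_of_iIndepFun hindep hL2 hmean hvar,
    inv_pow, Real.sq_sqrt (Nat.cast_nonneg T)]
  rw [mT, mT, gT, hm_cast, hn_cast, ← inv_mul_sum_cusumWeight_sq hn hnT hmT]
  ring

/-- For `Y t = μ + e t` with `e 1, …, e T` independent,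
square-integrable, mean `0`, variance `σ²`, and `u ∈ (0,1)` with `1 ≤ ⌊Tu⌋ ≤ T-1`,
the CUSUM process `Ž(·,u)` of the change-centered data
`Y̌ t(u) = Y t - δ̂(u)·1(t > ⌊Tu⌋)` satisfies
`E[Ž(s,u)²] = σ² (m_T(s) - g_T(s,u)²/m_T(u))` for every `s ∈ [0,1]`. -/
theorem stmt13 {Ω : Type*} [MeasurableSpace Ω] (P : Measure Ω) [IsProbabilityMeasure P]
    (T : ℕ) (hT : 2 ≤ T) (μ σ2 : ℝ) (e : ℕ → Ω → ℝ)
    (hmeas : ∀ k, Measurable (e k))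
    (hindep : iIndepFun
      (fun k : (Finset.Icc 1 T) => e (k : ℕ)) P)
    (hL2 : ∀ k ∈ Finset.Icc 1 T, MemLp (e k) 2 P)
    (hmean : ∀ k ∈ Finset.Icc 1 T, ∫ ω, e k ω ∂P = 0)
    (hvar : ∀ k ∈ Finset.Icc 1 T, ∫ ω, (e k ω) ^ 2 ∂P = σ2)
    (Y : ℕ → Ω → ℝ) (hY : ∀ t ω, Y t ω = μ + e t ω)
    (u : ℝ) (hu : u ∈ Set.Ioo (0 : ℝ) 1)
    (hu1 : 1 ≤ ⌊(T : ℝ) * u⌋) (hu2 : ⌊(T : ℝ) * u⌋ ≤ (T : ℤ) - 1)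
    (δhat : Ω → ℝ)
    (hδ : ∀ ω, δhat ω = ((T : ℝ) - (⌊(T : ℝ) * u⌋ : ℝ))⁻¹ *
          ∑ t ∈ Finset.Icc (⌊(T : ℝ) * u⌋.toNat + 1) T, Y t ω
        - ((⌊(T : ℝ) * u⌋ : ℝ))⁻¹ * ∑ t ∈ Finset.Icc 1 (⌊(T : ℝ) * u⌋.toNat), Y t ω) :
    ∀ s ∈ Set.Icc (0 : ℝ) 1,
      ∫ ω, (cusum T
          (fun t => Y t ω - δhat ω * (if ⌊(T : ℝ) * u⌋.toNat < t then 1 else 0)) s) ^ 2 ∂P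
        = σ2 * (mT T s - (gT T s u) ^ 2 / mT T u) :=
  stmt13_general P T μ σ2 e hindep hL2 hmean hvar Y hY u hu1 hu2 δhat hδ
end

section
/- Let T ≥ 2 be an integer, θ ∈ (0,1), t₀ = ⌊Tθ⌋ with 1 ≤ t₀ ≤ T−1, and let y_t = μ + δ·1(t > t₀), t = 1,…,T, be a deterministic signal with real constants μ, δ. Let u ∈ (0,1) satisfy 1 ≤ ⌊Tu⌋ ≤ T−1, and let Ž_y(s,u) be the CUSUM process of the centered signal y̌_t(u) = y_t − δ̂(u)·1(t > ⌊Tu⌋), where δ̂(u) = (T−⌊Tu⌋)^{−1} Σ_{t=⌊Tu⌋+1}^T y_t − ⌊Tu⌋^{−1} Σ_{t=1}^{⌊Tu⌋} y_t. Then for every s ∈ [0,1], Ž_y(s,u) = −δ·√T · ( g_T(s,θ) − g_T(s,u)·g_T(θ,u)/m_T(u) ). In particular, if ⌊Tu⌋ = ⌊Tθ⌋ then Ž_y(s,u) = 0 for all s ∈ [0,1]. -/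
lemma sum_ind (K a : ℕ) : ∑ k ∈ Finset.Icc 1 K, (if a < k then (1:ℝ) else 0)
    = (K : ℝ) - ((min K a : ℕ) : ℝ) := by
  induction K with
  | zero => simp
  | succ K ih =>
    rw [Finset.sum_Icc_succ_top (by omega), ih]
    rcases le_or_gt a K with h | h
    · rw [if_pos (by omega)]
      have h1 : min K a = a := by omega
      have h2 : min (K+1) a = a := by omega
      rw [h1, h2]; push_cast; ring
    · rw [if_neg (by omega)]
      have h1 : min K a = K := by omega
      have h2 : min (K+1) a = K+1 := by omega
      rw [h1, h2]; push_cast; ring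

lemma sum_sig (K a : ℕ) (μ d : ℝ) :
    ∑ k ∈ Finset.Icc 1 K, (μ + d * (if a < k then (1:ℝ) else 0))
      = K * μ + d * ((K : ℝ) - ((min K a : ℕ) : ℝ)) := by
  rw [Finset.sum_add_distrib, ← Finset.mul_sum, sum_ind, Finset.sum_const,
    Nat.card_Icc]
  simp

lemma sum_sig2 (K a b : ℕ) (μ d e : ℝ) :
    ∑ k ∈ Finset.Icc 1 K,
        ((μ + d * (if a < k then (1:ℝ) else 0)) - e * (if b < k then (1:ℝ) else 0))
      = (K * μ + d * ((K : ℝ) - ((min K a : ℕ) : ℝ)))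
          - e * ((K : ℝ) - ((min K b : ℕ) : ℝ)) := by
  rw [Finset.sum_sub_distrib, sum_sig, ← Finset.mul_sum, sum_ind]

lemma sum_sig3 (K a b : ℕ) (μ d e c : ℝ) :
    ∑ k ∈ Finset.Icc 1 K,
        (((μ + d * (if a < k then (1:ℝ) else 0)) - e * (if b < k then (1:ℝ) else 0)) - c)
      = ((K * μ + d * ((K : ℝ) - ((min K a : ℕ) : ℝ)))
          - e * ((K : ℝ) - ((min K b : ℕ) : ℝ))) - K * c := by
  rw [Finset.sum_sub_distrib, sum_sig2, Finset.sum_const, Nat.card_Icc]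
  simp

lemma g_eq (x y : ℝ) : g x y = min x y - x * y := by
  unfold g; rw [mul_sub, mul_one, min_mul_max]

set_option maxHeartbeats 1000000 in
/-- For the deterministic signal `y t = μ + δ·1(t > t₀)` with
`t₀ = ⌊Tθ⌋`, `1 ≤ t₀ ≤ T-1`, and `u ∈ (0,1)` with `1 ≤ ⌊Tu⌋ ≤ T-1`, the CUSUM
process `Ž_y(·,u)` of the centered signal `y̌ t(u) = y t - δ̂(u)·1(t > ⌊Tu⌋)`
satisfies `Ž_y(s,u) = -δ √T (g_T(s,θ) - g_T(s,u) g_T(θ,u)/m_T(u))` for all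
`s ∈ [0,1]`; in particular it vanishes identically when `⌊Tu⌋ = ⌊Tθ⌋`. -/
theorem stmt14 (T : ℕ) (hT : 2 ≤ T) (θ : ℝ) (hθ : θ ∈ Set.Ioo (0 : ℝ) 1)
    (t₀ : ℕ) (ht₀ : (t₀ : ℤ) = ⌊(T : ℝ) * θ⌋) (ht₀1 : 1 ≤ t₀) (ht₀2 : t₀ ≤ T - 1)
    (μ δ : ℝ) (y : ℕ → ℝ) (hy : ∀ t, y t = μ + δ * (if t₀ < t then 1 else 0))
    (u : ℝ) (hu : u ∈ Set.Ioo (0 : ℝ) 1)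
    (hu1 : 1 ≤ ⌊(T : ℝ) * u⌋) (hu2 : ⌊(T : ℝ) * u⌋ ≤ (T : ℤ) - 1)
    (δhat : ℝ)
    (hδ : δhat = ((T : ℝ) - (⌊(T : ℝ) * u⌋ : ℝ))⁻¹ *
          ∑ t ∈ Finset.Icc (⌊(T : ℝ) * u⌋.toNat + 1) T, y t
        - ((⌊(T : ℝ) * u⌋ : ℝ))⁻¹ * ∑ t ∈ Finset.Icc 1 (⌊(T : ℝ) * u⌋.toNat), y t)
    (ycheck : ℕ → ℝ)
    (hyc : ∀ t, ycheck t = y t - δhat * (if ⌊(T : ℝ) * u⌋.toNat < t then 1 else 0)) :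
    (∀ s ∈ Set.Icc (0 : ℝ) 1,
        cusum T ycheck s
          = -δ * Real.sqrt T * (gT T s θ - gT T s u * gT T θ u / mT T u))
      ∧ (⌊(T : ℝ) * u⌋ = ⌊(T : ℝ) * θ⌋ →
          ∀ s ∈ Set.Icc (0 : ℝ) 1, cusum T ycheck s = 0) := by
  obtain ⟨hθ0, hθ1⟩ := hθ
  obtain ⟨hu0, hu1'⟩ := hu
  set N : ℕ := ⌊(T : ℝ) * u⌋.toNat with hNdef
  have hNz : (N : ℤ) = ⌊(T : ℝ) * u⌋ := Int.toNat_of_nonneg (by omega)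
  have hNr : ((N : ℕ) : ℝ) = ((⌊(T : ℝ) * u⌋ : ℤ) : ℝ) := by
    exact_mod_cast congrArg (Int.cast : ℤ → ℝ) hNz
  have hAr : ((t₀ : ℕ) : ℝ) = ((⌊(T : ℝ) * θ⌋ : ℤ) : ℝ) := by
    exact_mod_cast congrArg (Int.cast : ℤ → ℝ) ht₀
  have hN1 : 1 ≤ N := by omega
  have hN2 : N ≤ T - 1 := by omega
  have hTr : (0 : ℝ) < T := by exact_mod_cast Nat.lt_of_lt_of_le Nat.zero_lt_two hT
  have hTne : (T : ℝ) ≠ 0 := ne_of_gt hTr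
  have hNrpos : (0 : ℝ) < N := by exact_mod_cast hN1
  have hNne : (N : ℝ) ≠ 0 := ne_of_gt hNrpos
  have hNltT : (N : ℝ) < T := by exact_mod_cast (by omega : N < T)
  have hTNne : (T : ℝ) - N ≠ 0 := sub_ne_zero.mpr (ne_of_lt hNltT).symm
  -- closed form for the two sums of y
  have hyT : ∑ t ∈ Finset.Icc 1 T, y t
      = T * μ + δ * ((T : ℝ) - t₀) := by
    simp only [hy]
    rw [sum_sig, (by omega : min T t₀ = t₀)]
  have hyN : ∑ t ∈ Finset.Icc 1 N, y t
      = N * μ + δ * ((N : ℝ) - ((min N t₀ : ℕ) : ℝ)) := by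
    simp only [hy]; rw [sum_sig]
  have hyNT : ∑ t ∈ Finset.Icc (N + 1) T, y t
      = (T * μ + δ * ((T : ℝ) - t₀)) - (N * μ + δ * ((N : ℝ) - ((min N t₀ : ℕ) : ℝ))) := by
    have hdis : Disjoint (Finset.Icc 1 N) (Finset.Icc (N+1) T) := by
      rw [Finset.disjoint_left]
      intro x hx hx'
      simp only [Finset.mem_Icc] at hx hx'
      omega
    have hun : Finset.Icc 1 N ∪ Finset.Icc (N+1) T = Finset.Icc 1 T := by
      ext x
      simp only [Finset.mem_union, Finset.mem_Icc]
      omega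
    have hsu := Finset.sum_union hdis (f := y)
    rw [hun, hyT, hyN] at hsu
    linarith
  have hδ2 : δhat = ((T : ℝ) - N)⁻¹ *
        ((T * μ + δ * ((T : ℝ) - t₀)) - (N * μ + δ * ((N : ℝ) - ((min N t₀ : ℕ) : ℝ))))
      - (N : ℝ)⁻¹ * (N * μ + δ * ((N : ℝ) - ((min N t₀ : ℕ) : ℝ))) := by
    rw [hδ, hyNT, hyN, ← hNr]
  have htot : ∑ t ∈ Finset.Icc 1 T, ycheck t
      = (T * μ + δ * ((T : ℝ) - t₀)) - δhat * ((T : ℝ) - N) := by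
    simp only [hyc, hy]
    rw [sum_sig2, (by omega : min T t₀ = t₀), (by omega : min T N = N)]
  have hsq : Real.sqrt T * Real.sqrt T = (T : ℝ) := Real.mul_self_sqrt (le_of_lt hTr)
  have hsne : Real.sqrt T ≠ 0 := by
    intro h; rw [h, mul_zero] at hsq; exact hTne hsq.symm
  have key : ∀ s ∈ Set.Icc (0 : ℝ) 1,
      cusum T ycheck s = -δ * Real.sqrt T * (gT T s θ - gT T s u * gT T θ u / mT T u) := by
    intro s hs
    obtain ⟨hs0, hs1⟩ := hs
    set K : ℕ := ⌊(T : ℝ) * s⌋.toNat with hKdef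
    have hfnn : 0 ≤ ⌊(T : ℝ) * s⌋ := Int.floor_nonneg.mpr (by positivity)
    have hKz : (K : ℤ) = ⌊(T : ℝ) * s⌋ := Int.toNat_of_nonneg hfnn
    have hKr : ((K : ℕ) : ℝ) = ((⌊(T : ℝ) * s⌋ : ℤ) : ℝ) := by
      exact_mod_cast congrArg (Int.cast : ℤ → ℝ) hKz
    have hKT : K ≤ T := by
      have h2 : (T : ℝ) * s ≤ ((T : ℤ) : ℝ) := by push_cast; nlinarith
      have h1 : ⌊(T : ℝ) * s⌋ ≤ (T : ℤ) := by
        calc ⌊(T : ℝ) * s⌋ ≤ ⌊((T : ℤ) : ℝ)⌋ := Int.floor_le_floor h2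
        _ = T := Int.floor_intCast T
      omega
    unfold cusum
    rw [htot, ← hKdef]
    simp only [hyc, hy]
    rw [sum_sig3]
    -- rewrite the g/mT side
    rw [show gT T s θ = g ((K : ℝ)/T) ((t₀ : ℝ)/T) by unfold gT; rw [hKr, hAr],
        show gT T s u = g ((K : ℝ)/T) ((N : ℝ)/T) by unfold gT; rw [hKr, hNr],
        show gT T θ u = g ((t₀ : ℝ)/T) ((N : ℝ)/T) by unfold gT; rw [hAr, hNr],
        show mT T u = ((N : ℝ)/T) * (1 - (N : ℝ)/T) by unfold mT; rw [hNr]]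
    rw [g_eq, g_eq, g_eq,
        show min ((K : ℝ)/T) ((t₀ : ℝ)/T) = ((min K t₀ : ℕ) : ℝ)/T by
          push_cast; exact min_div_div_right (le_of_lt hTr) _ _,
        show min ((K : ℝ)/T) ((N : ℝ)/T) = ((min K N : ℕ) : ℝ)/T by
          push_cast; exact min_div_div_right (le_of_lt hTr) _ _,
        show min ((t₀ : ℝ)/T) ((N : ℝ)/T) = ((min t₀ N : ℕ) : ℝ)/T by
          push_cast; exact min_div_div_right (le_of_lt hTr) _ _]
    rw [hδ2, (by omega : min N t₀ = min t₀ N)]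
    set m1 : ℝ := ((min K t₀ : ℕ) : ℝ)
    set m2 : ℝ := ((min K N : ℕ) : ℝ)
    set m3 : ℝ := ((min t₀ N : ℕ) : ℝ)
    rw [show (Real.sqrt T)⁻¹ = Real.sqrt T / T by
      rw [eq_div_iff hTne, ← hsq]; field_simp; rw [Real.sq_sqrt (sq_nonneg _)]]
    field_simp
    ring
  refine ⟨key, fun heq s hs => ?_⟩
  rw [key s hs]
  have e1 : gT T s u = gT T s θ := by unfold gT; rw [heq]
  have e2 : gT T θ u = mT T u := by
    unfold gT mT g
    rw [heq, min_self, max_self]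
  have hM : mT T u ≠ 0 := by
    unfold mT
    rw [← hNr]
    have h1 : (0:ℝ) < (N : ℝ) / T := by positivity
    have h2 : (N : ℝ) / T < 1 := by
      rw [div_lt_one hTr]; exact hNltT
    have : (0:ℝ) < ((N : ℝ)/T) * (1 - (N : ℝ)/T) := by nlinarith
    exact ne_of_gt this
  rw [e1, e2, mul_div_assoc, div_self hM, mul_one, sub_self, mul_zero]
end
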